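/- arXiv:1711.09016 — 3 statements merged into one kernel-verified Lean document; each statement's English description precedes it below -/
import Mathlib

section
/- For all integers n ≥ 0 and k ≥ 1, the cardinality of RA_{n+2,k} equals (n−k+2)·B̃(n,k−1). -/
open Finset

/-- The number of ascents of a permutation of `{1, …, m+1}`. -/
def asc {m : ℕ} (π : Equiv.Perm (Fin (m + 1))) : ℕ :=
  (Finset.univ.filter fun i : Fin m => π i.castSucc < π i.succ).card

/-- The set `𝒬_{m+1}` of permutations of `{1, …, m+1}` whose largest entry appears
as the first descent (the identity permutation is included). -/
def Qset (m : ℕ) : Finset (Equiv.Perm (Fin (m + 1))) :=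
  Finset.univ.filter fun π =>
    ∀ i : Fin m, i.succ ≤ π⁻¹ (Fin.last m) → π i.castSucc < π i.succ

/-- `B̃(n,k)`: the number of permutations in `𝒬_{n+1}` with exactly `k` ascents. -/
def Btil (n k : ℕ) : ℕ := ((Qset n).filter fun π => asc π = k).card

/-- With `a = π⁻¹(1)` (smallest entry is `0 : Fin (m+1)`, positions `0`-indexed):
either `a` is the first position, or `a` is interior and `π(a-1) > π(a+1)`. -/
def raCond {m : ℕ} (π : Equiv.Perm (Fin (m + 1))) : Prop :=
  π⁻¹ 0 = 0 ∨ ∃ j : ℕ, ∃ h : j + 2 ≤ m,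
    (π⁻¹ 0 : ℕ) = j + 1 ∧ π ⟨j + 2, by omega⟩ < π ⟨j, by omega⟩

open scoped Classical in
/-- `RA_{m+1,k}`: permutations `π` of `{1, …, m+1}` with `π ∈ 𝒬_{m+1}`, `asc π = k`,
and, with `a = π⁻¹(1)`, either `a = 1` or `π(a-1) > π(a+1)`. -/
noncomputable def RA (m k : ℕ) : Finset (Equiv.Perm (Fin (m + 1))) :=
  (Qset m).filter fun π => asc π = k ∧ raCond π

/-!
Deleting the entry `1` of `π ∈ RA_{n+2,k}` and lowering the other entries by one gives a
permutation `σ ∈ 𝒬_{n+1}`. Conversely, condition (3) says that `1` is inserted into `σ` either in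
front or right after one of its descents, i.e. at one of `1 + des σ` places. Such an insertion
turns the descent it splits into a descent followed by an ascent, so it adds exactly one ascent,
and it does not disturb the increasing run before `n + 2`. Hence every `σ ∈ 𝒬_{n+1}` with `k - 1`
ascents has `1 + (n - (k - 1))` preimages in `RA_{n+2,k}`.
-/

open Equiv

section

variable {n : ℕ}

/-- Insert a new smallest entry at position `a` and shift the entries of `σ` up by one. -/
def insertMin (σ : Perm (Fin (n + 1))) (a : Fin (n + 2)) : Perm (Fin (n + 2)) :=
  ((finSuccEquiv' a).trans (optionCongr σ)).trans (finSuccEquiv' 0).symm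

section insertMin

variable (σ : Perm (Fin (n + 1))) (a : Fin (n + 2))

@[simp]
lemma insertMin_apply_self : insertMin σ a a = 0 := by
  simp [insertMin]

@[simp]
lemma insertMin_apply_succAbove (i : Fin (n + 1)) :
    insertMin σ a (a.succAbove i) = (σ i).succ := by
  simp [insertMin, Fin.zero_succAbove]

@[simp]
lemma insertMin_inv_zero : (insertMin σ a)⁻¹ 0 = a := by
  rw [Perm.inv_eq_iff_eq, insertMin_apply_self]

lemma insertMin_inv_last :
    (insertMin σ a)⁻¹ (Fin.last (n + 1)) = a.succAbove (σ⁻¹ (Fin.last n)) := by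
  rw [Perm.inv_eq_iff_eq, insertMin_apply_succAbove, Perm.coe_inv, apply_symm_apply, Fin.succ_last]

end insertMin

lemma insertMin_injective :
    Function.Injective fun p : Perm (Fin (n + 1)) × Fin (n + 2) => insertMin p.1 p.2 := by
  rintro ⟨σ, a⟩ ⟨τ, b⟩ h
  obtain rfl : a = b := by simpa using congr(($h)⁻¹ 0)
  refine Prod.ext (Equiv.ext fun i => ?_) rfl
  simpa using congr($h (a.succAbove i))

noncomputable def insertMinEquiv : Perm (Fin (n + 1)) × Fin (n + 2) ≃ Perm (Fin (n + 2)) :=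
  .ofBijective _ <| (Fintype.bijective_iff_injective_and_card _).2
    ⟨insertMin_injective, by simp [Fintype.card_perm, Nat.factorial_succ]; ring⟩

lemma insertMin_castSucc_lt_succ (σ : Perm (Fin (n + 1))) (a : Fin (n + 1)) :
    insertMin σ a.castSucc a.castSucc < insertMin σ a.castSucc a.succ := by
  rw [insertMin_apply_self, ← Fin.succAbove_castSucc_self, insertMin_apply_succAbove]
  exact Fin.succ_pos _

lemma mem_Qset_iff_forall_not_lt {m : ℕ} (π : Perm (Fin (m + 1))) :
    π ∈ Qset m ↔ ∀ i : Fin m, ¬ π i.castSucc < π i.succ → π⁻¹ (Fin.last m) ≤ i.castSucc := by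
  simp only [Qset, mem_filter, mem_univ, true_and, ← Fin.castSucc_lt_iff_succ_le]
  exact forall_congr' fun i => by rw [← not_lt, not_imp_not]

def IsAfterDescent (σ : Perm (Fin (n + 1))) (a : Fin (n + 1)) : Prop :=
  ∀ s : Fin n, s.succ = a → σ s.succ < σ s.castSucc

section IsAfterDescent

variable {σ : Perm (Fin (n + 1))} {a : Fin (n + 1)}

/-- The pair straddling the inserted `0` from the left is a descent of the new permutation; it
replaces the pair `(a - 1, a)` of `σ`, which is a descent by hypothesis. -/
lemma insertMin_castSucc_lt_succ_iff (h : IsAfterDescent σ a) (s : Fin n) :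
    insertMin σ a.castSucc (a.succAbove s).castSucc < insertMin σ a.castSucc (a.succAbove s).succ ↔
      σ s.castSucc < σ s.succ := by
  rcases lt_or_ge s.castSucc a with hs | hs
  · rw [Fin.succAbove_of_castSucc_lt _ _ hs, ← Fin.succAbove_castSucc_of_lt _ _ hs,
      insertMin_apply_succAbove, Fin.succ_castSucc]
    rcases (Fin.castSucc_lt_iff_succ_le.1 hs).lt_or_eq with hs' | rfl
    · rw [← Fin.succAbove_castSucc_of_lt _ _ hs', insertMin_apply_succAbove, Fin.succ_lt_succ_iff]
    · simpa [Fin.not_lt_zero] using (h s rfl).le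
  · rw [Fin.succAbove_of_le_castSucc _ _ hs, ← Fin.succ_castSucc,
      ← Fin.succAbove_castSucc_of_le _ _ hs,
      ← Fin.succAbove_castSucc_of_le _ _ (hs.trans (Fin.castSucc_le_succ s)),
      insertMin_apply_succAbove, insertMin_apply_succAbove, Fin.succ_lt_succ_iff]

lemma asc_insertMin (h : IsAfterDescent σ a) : asc (insertMin σ a.castSucc) = asc σ + 1 := by
  simp only [asc, card_filter, Fin.sum_univ_succAbove _ a, insertMin_castSucc_lt_succ,
    insertMin_castSucc_lt_succ_iff h, if_true]
  exact add_comm _ _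

lemma insertMin_mem_Qset_iff (h : IsAfterDescent σ a) :
    insertMin σ a.castSucc ∈ Qset (n + 1) ↔ σ ∈ Qset n := by
  rw [mem_Qset_iff_forall_not_lt, mem_Qset_iff_forall_not_lt, Fin.forall_iff_succAbove a,
    insertMin_inv_last]
  simp only [insertMin_castSucc_lt_succ, not_true, false_imp_iff, true_and,
    insertMin_castSucc_lt_succ_iff h]
  simp only [← Fin.castSucc_succAbove_castSucc, Fin.succAbove_le_succAbove_iff]

end IsAfterDescent

lemma insertMin_succ_succ_lt_castSucc_castSucc_iff (σ : Perm (Fin (n + 1))) (s : Fin n) :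
    insertMin σ s.succ.castSucc s.succ.succ < insertMin σ s.succ.castSucc s.castSucc.castSucc ↔
      σ s.succ < σ s.castSucc := by
  rw [← Fin.succAbove_castSucc_self s.succ,
    ← Fin.succAbove_castSucc_of_lt _ _ Fin.castSucc_lt_succ,
    insertMin_apply_succAbove, insertMin_apply_succAbove, Fin.succ_lt_succ_iff]

lemma raCond_insertMin_iff (σ : Perm (Fin (n + 1))) (b : Fin (n + 2)) :
    raCond (insertMin σ b) ↔ ∃ a, IsAfterDescent σ a ∧ a.castSucc = b := by
  rw [raCond, insertMin_inv_zero]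
  constructor
  · rintro (rfl | ⟨j, hj, hb, hlt⟩)
    · exact ⟨0, fun s hs => absurd hs (Fin.succ_ne_zero s), rfl⟩
    · obtain ⟨s, rfl⟩ : ∃ s : Fin n, (s : ℕ) = j := ⟨⟨j, by omega⟩, rfl⟩
      obtain rfl : b = s.succ.castSucc := Fin.ext hb
      refine ⟨s.succ, fun t ht => ?_, rfl⟩
      rw [Fin.succ_injective _ ht]
      exact (insertMin_succ_succ_lt_castSucc_castSucc_iff σ s).1 hlt
  · rintro ⟨a, ha, rfl⟩
    cases a using Fin.cases with
    | zero => exact .inl rfl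
    | succ s =>
      exact .inr ⟨s, by omega, by simp,
        (insertMin_succ_succ_lt_castSucc_castSucc_iff σ s).2 (ha s rfl)⟩

lemma insertMin_mem_RA_iff (σ : Perm (Fin (n + 1))) (b : Fin (n + 2)) (k : ℕ) :
    insertMin σ b ∈ RA (n + 1) (k + 1) ↔
      (σ ∈ Qset n ∧ asc σ = k) ∧ ∃ a, IsAfterDescent σ a ∧ a.castSucc = b := by
  simp only [RA, mem_filter, raCond_insertMin_iff]
  constructor
  · rintro ⟨hQ, hasc, a, ha, rfl⟩
    rw [asc_insertMin ha, Nat.add_right_cancel_iff] at hasc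
    exact ⟨⟨(insertMin_mem_Qset_iff ha).1 hQ, hasc⟩, a, ha, rfl⟩
  · rintro ⟨⟨hQ, hasc⟩, a, ha, rfl⟩
    exact ⟨(insertMin_mem_Qset_iff ha).2 hQ, by rw [asc_insertMin ha, hasc], a, ha, rfl⟩

lemma card_filter_descent_add_asc {m : ℕ} (π : Perm (Fin (m + 1))) :
    #{i : Fin m | π i.succ < π i.castSucc} + asc π = m := by
  have hsplit := card_filter_add_card_filter_not (s := univ)
    fun i : Fin m => π i.castSucc < π i.succ
  have hnot (i : Fin m) : ¬ π i.castSucc < π i.succ ↔ π i.succ < π i.castSucc :=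
    not_lt.trans (π.injective.ne (Fin.castSucc_lt_succ (i := i)).ne').le_iff_lt
  simp only [hnot, card_univ, Fintype.card_fin] at hsplit
  rw [asc, add_comm, hsplit]

lemma card_filter_isAfterDescent (σ : Perm (Fin (n + 1))) [DecidablePred (IsAfterDescent σ)] :
    #{a | IsAfterDescent σ a} = n + 1 - asc σ := by
  have hzero : IsAfterDescent σ 0 := fun s hs => absurd hs (Fin.succ_ne_zero s)
  have hsucc (s : Fin n) : IsAfterDescent σ s.succ ↔ σ s.succ < σ s.castSucc :=
    ⟨fun h => h s rfl, fun h t ht => Fin.succ_injective _ ht ▸ h⟩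
  rw [Fin.card_filter_univ_succ', if_pos hzero]
  simp only [hsucc]
  have := card_filter_descent_add_asc σ
  omega

end

theorem card_RA (n k : ℕ) (hk : 1 ≤ k) :
    (RA (n + 1) k).card = (n + 2 - k) * Btil n (k - 1) := by
  classical
  obtain ⟨k, rfl⟩ := Nat.exists_eq_add_of_le' hk
  let B := (Qset n).filter fun σ => asc σ = k
  calc #(RA (n + 1) (k + 1))
      = #(B.sigma fun σ => (univ.filter (IsAfterDescent σ)).map Fin.castSuccEmb) :=
        (card_equiv ((Equiv.sigmaEquivProd _ _).trans insertMinEquiv) fun ⟨σ, b⟩ => by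
          simp [B, insertMinEquiv, insertMin_mem_RA_iff]).symm
    _ = ∑ σ ∈ B, (n + 1 - k) := by
        rw [card_sigma]
        exact sum_congr rfl fun σ hσ => by
          rw [card_map, card_filter_isAfterDescent, (mem_filter.1 hσ).2]
    _ = (n + 2 - (k + 1)) * Btil n (k + 1 - 1) := by
        rw [sum_const, smul_eq_mul, mul_comm, Nat.add_sub_cancel, Btil]
        congr 1
        omega
end

section
/- For all integers n ≥ 1 and k ≥ 1, the cardinality of R̄FA_{n+1,k} equals n·B̃(n−1,k−1). -/
open Finset

/-- `R̄FA_{n+1,k}`: pairs `(π, i)` with `π ∈ 𝒬_{n+1}`, `asc π = k`,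
`i ∈ {1, …, k} ∪ {n+1}`, and `i ≤ π⁻¹(n+1) - 1`, where `π⁻¹(n+1)` is the
(`1`-indexed) position of the largest entry, so `π⁻¹(n+1) - 1 = (π⁻¹ (Fin.last n) : ℕ)`. -/
def RFAbar (n k : ℕ) : Finset (Equiv.Perm (Fin (n + 1)) × ℕ) :=
  (Qset n ×ˢ (Finset.Icc 1 k ∪ {n + 1})).filter fun p =>
    asc p.1 = k ∧ p.2 ≤ (p.1⁻¹ (Fin.last n) : ℕ)

/-!
Deleting the entry `b` at a position `a` before the maximum of `π ∈ 𝒬_{n+1}` leaves a permutation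
`σ ∈ 𝒬_n` with one ascent fewer. Since the entries before the maximum of `π` increase, `a` is
recovered from `σ` and `b` as the first position of `σ` whose entry is at least `b`, and inserting
`b` there into any `σ ∈ 𝒬_n` lands back in `𝒬_{n+1}`. So `(π, a + 1) ↦ (b, σ)` is a bijection from
`R̄FA_{n+1,k}` onto `{1, …, n} × QA_{n,k-1}`. The bound `i ≤ k` in `R̄FA` is automatic: the entries
before the maximum already give `π⁻¹(n+1) - 1` ascents.
-/

open Equiv

namespace Fin

lemma castSucc_succAbove_succ_of_ne {n : ℕ} {a : Fin (n + 1)} {x : Fin n} (h : x.succ ≠ a) :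
    a.castSucc.succAbove x.succ = (a.succAbove x).succ := by
  rw [Ne, Fin.ext_iff, val_succ] at h
  simp only [succAbove, lt_def, val_succ, val_castSucc]
  split_ifs <;> simp only [Fin.ext_iff, val_succ, val_castSucc] <;> omega

lemma succAbove_le_iff_succ_le {n : ℕ} {a q : Fin (n + 1)} (ha : a ≤ q) (x : Fin n) :
    a.succAbove x ≤ q ↔ x.succ ≤ q := by
  rcases lt_or_ge x.castSucc a with h | h
  · rw [succAbove_of_castSucc_lt _ _ h]
    exact iff_of_true (h.le.trans ha) ((castSucc_lt_iff_succ_le.1 h).trans ha)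
  · rw [succAbove_of_le_castSucc _ _ h]

end Fin

namespace Equiv.Perm

variable {N : ℕ}

def insertAt (a b : Fin (N + 1)) (σ : Perm (Fin N)) : Perm (Fin (N + 1)) :=
  (finSuccEquiv' a).trans (σ.optionCongr.trans (finSuccEquiv' b).symm)

variable (a b : Fin (N + 1)) (σ : Perm (Fin N))

@[simp] lemma insertAt_apply_self : insertAt a b σ a = b := by
  simp [insertAt]

@[simp] lemma insertAt_apply_succAbove (x : Fin N) :
    insertAt a b σ (a.succAbove x) = b.succAbove (σ x) := by
  simp [insertAt]

lemma insertAt_inv_apply_succAbove (y : Fin N) :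
    (insertAt a b σ)⁻¹ (b.succAbove y) = a.succAbove (σ⁻¹ y) := by
  rw [inv_eq_iff_eq, insertAt_apply_succAbove, coe_inv, apply_symm_apply]

lemma insertAt_injective : Function.Injective (insertAt (N := N) a b) := fun σ τ h =>
  ext fun x => by simpa using DFunLike.congr_fun h (a.succAbove x)

lemma exists_insertAt_eq (π : Perm (Fin (N + 1))) : ∃ σ, insertAt a (π a) σ = π := by
  set e := (finSuccEquiv' a).symm.trans (π.trans (finSuccEquiv' (π a)))
  refine ⟨removeNone e, ext fun u => ?_⟩
  rcases eq_or_ne u a with rfl | hu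
  · exact insertAt_apply_self _ _ _
  obtain ⟨x, rfl⟩ := Fin.exists_succAbove_eq hu
  obtain ⟨y, hy⟩ := Fin.exists_succAbove_eq (π.injective.ne (Fin.succAbove_ne a x))
  have he : e (some x) = some y := by simp [e, ← hy]
  have hσx : some (removeNone e x) = some y := (removeNone_some e ⟨y, he⟩).trans he
  rw [insertAt_apply_succAbove, Option.some_inj.1 hσx, hy]

variable {m : ℕ} {σ : Perm (Fin (m + 1))} {a b : Fin (m + 1)}

lemma insertAt_castSucc_lt_succ_iff :
    insertAt a.castSucc b.castSucc σ a.castSucc < insertAt a.castSucc b.castSucc σ a.succ ↔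
      b ≤ σ a := by
  rw [insertAt_apply_self, ← Fin.succAbove_castSucc_self a, insertAt_apply_succAbove,
    Fin.lt_succAbove_iff_le_castSucc, Fin.castSucc_le_castSucc_iff]

lemma insertAt_succAbove_castSucc_lt_succ_iff (hprev : ∀ x < a, σ x < b) (hge : b ≤ σ a)
    (x : Fin m) :
    insertAt a.castSucc b.castSucc σ (a.succAbove x).castSucc
        < insertAt a.castSucc b.castSucc σ (a.succAbove x).succ ↔
      σ x.castSucc < σ x.succ := by
  rw [← Fin.castSucc_succAbove_castSucc, insertAt_apply_succAbove]
  by_cases hx : x.succ = a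
  · subst hx
    rw [Fin.succAbove_succ_self, Fin.succ_castSucc, insertAt_apply_self,
      Fin.succAbove_lt_iff_castSucc_lt, Fin.castSucc_lt_castSucc_iff]
    have hlt := hprev x.castSucc Fin.castSucc_lt_succ
    exact iff_of_true hlt (hlt.trans_le hge)
  · rw [← Fin.castSucc_succAbove_succ_of_ne hx, insertAt_apply_succAbove,
      Fin.succAbove_lt_succAbove_iff]

lemma asc_insertAt (hprev : ∀ x < a, σ x < b) (hge : b ≤ σ a) :
    asc (insertAt a.castSucc b.castSucc σ) = asc σ + 1 := by
  simp only [asc, card_filter, Fin.sum_univ_succAbove _ a,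
    insertAt_succAbove_castSucc_lt_succ_iff hprev hge,
    if_pos (insertAt_castSucc_lt_succ_iff.2 hge)]
  ring

end Equiv.Perm

open Perm

section Qset

variable {m : ℕ} {π : Perm (Fin (m + 1))}

lemma strictMonoOn_of_mem_Qset (hπ : π ∈ Qset m) :
    StrictMonoOn π (Set.Iic (π⁻¹ (Fin.last m))) :=
  strictMonoOn_Iic_of_lt_succ fun j hj => by
    obtain ⟨i, rfl⟩ := Fin.eq_castSucc_of_ne_last (Fin.ne_last_of_lt hj)
    rw [Fin.orderSucc_castSucc]
    exact (mem_filter.1 hπ).2 i (Fin.castSucc_lt_iff_succ_le.1 hj)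

lemma inv_last_le_asc (hπ : π ∈ Qset m) : (π⁻¹ (Fin.last m) : ℕ) ≤ asc π :=
  calc (π⁻¹ (Fin.last m) : ℕ) = #{i : Fin m | (i : ℕ) < π⁻¹ (Fin.last m)} := by
        rw [Fin.card_filter_val_lt]
        omega
    _ ≤ asc π := card_le_card fun i hi => by
        simp only [mem_filter, mem_univ, true_and] at hi ⊢
        exact (mem_filter.1 hπ).2 i (Fin.le_def.2 hi)

end Qset

section InsertPos

variable {m : ℕ} (σ : Perm (Fin (m + 1))) (b : Fin (m + 1)) {a x : Fin (m + 1)}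

def insertPos : Fin (m + 1) :=
  (univ.filter fun x => b ≤ σ x).min' ⟨σ⁻¹ b, by simp⟩

lemma le_apply_insertPos : b ≤ σ (insertPos σ b) :=
  (mem_filter.1 (min'_mem (univ.filter fun x => b ≤ σ x) _)).2

variable {σ b}

lemma insertPos_le (hx : b ≤ σ x) : insertPos σ b ≤ x :=
  min'_le _ _ (by simpa using hx)

lemma apply_lt_of_lt_insertPos (hx : x < insertPos σ b) : σ x < b :=
  lt_of_not_ge fun h => (insertPos_le h).not_gt hx

lemma insertPos_eq (hprev : ∀ x < a, σ x < b) (hge : b ≤ σ a) : insertPos σ b = a :=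
  le_antisymm (insertPos_le hge)
    (not_lt.1 fun h => (hprev _ h).not_ge (le_apply_insertPos σ b))

lemma insertPos_le_inv_last : insertPos σ b ≤ σ⁻¹ (Fin.last m) :=
  insertPos_le (by simpa using Fin.le_last b)

end InsertPos

section InsertInPrefix

variable {m : ℕ} (σ : Perm (Fin (m + 1))) (b : Fin (m + 1))

def insertInPrefix : Perm (Fin (m + 2)) :=
  insertAt (insertPos σ b).castSucc b.castSucc σ

lemma asc_insertInPrefix : asc (insertInPrefix σ b) = asc σ + 1 :=
  asc_insertAt (fun _ => apply_lt_of_lt_insertPos) (le_apply_insertPos σ b)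

lemma insertInPrefix_inv_last :
    (insertInPrefix σ b)⁻¹ (Fin.last (m + 1)) = (σ⁻¹ (Fin.last m)).succ := by
  rw [← Fin.succ_last, ← Fin.succAbove_castSucc_of_le b _ (Fin.le_last b), insertInPrefix,
    insertAt_inv_apply_succAbove, Fin.succAbove_castSucc_of_le _ _ insertPos_le_inv_last]

lemma insertInPrefix_mem_Qset_iff : insertInPrefix σ b ∈ Qset (m + 1) ↔ σ ∈ Qset m := by
  simp only [Qset, mem_filter, mem_univ, true_and, insertInPrefix_inv_last, Fin.succ_le_succ_iff]
  rw [Fin.forall_iff_succAbove (insertPos σ b)]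
  simp only [insertInPrefix, insertAt_succAbove_castSucc_lt_succ_iff
      (fun _ => apply_lt_of_lt_insertPos) (le_apply_insertPos σ b),
    Fin.succAbove_le_iff_succ_le insertPos_le_inv_last,
    insertAt_castSucc_lt_succ_iff.2 (le_apply_insertPos σ b), imp_true_iff, true_and]

lemma insertInPrefix_inj {τ : Perm (Fin (m + 1))} {c : Fin (m + 1)}
    (h : insertInPrefix σ b = insertInPrefix τ c) (hpos : insertPos σ b = insertPos τ c) :
    b = c ∧ σ = τ := by
  rw [insertInPrefix, insertInPrefix, hpos] at h
  obtain rfl : b = c := Fin.castSucc_injective _ <| by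
    simpa using DFunLike.congr_fun h (insertPos τ c).castSucc
  exact ⟨rfl, insertAt_injective _ _ h⟩

end InsertInPrefix

section RFAbar

variable {m k : ℕ}

lemma insertInPrefix_mem_RFAbar (hk : 1 ≤ k) {σ : Perm (Fin (m + 1))} (hσ : σ ∈ Qset m)
    (hasc : asc σ = k - 1) (b : Fin (m + 1)) :
    (insertInPrefix σ b, (insertPos σ b : ℕ) + 1) ∈ RFAbar (m + 1) k := by
  have hπ := (insertInPrefix_mem_Qset_iff σ b).2 hσ
  have hπasc : asc (insertInPrefix σ b) = k := by rw [asc_insertInPrefix]; omega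
  have hpos : (insertPos σ b : ℕ) + 1 ≤ (insertInPrefix σ b)⁻¹ (Fin.last (m + 1)) := by
    rw [insertInPrefix_inv_last, Fin.val_succ, add_le_add_iff_right]
    exact insertPos_le_inv_last
  have hpk := inv_last_le_asc hπ
  simp only [RFAbar, mem_filter, mem_product, mem_union, mem_Icc, mem_singleton]
  exact ⟨⟨hπ, .inl ⟨by omega, by omega⟩⟩, hπasc, hpos⟩

lemma exists_insertInPrefix_eq {π : Perm (Fin (m + 2))} {i : ℕ}
    (h : (π, i) ∈ RFAbar (m + 1) k) :
    ∃ b σ, σ ∈ Qset m ∧ asc σ = k - 1 ∧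
      insertInPrefix σ b = π ∧ (insertPos σ b : ℕ) + 1 = i := by
  simp only [RFAbar, mem_filter, mem_product, mem_union, mem_Icc, mem_singleton] at h
  obtain ⟨⟨hπ, hi⟩, hasc, hip⟩ := h
  have hp := (π⁻¹ (Fin.last (m + 1))).isLt
  obtain ⟨a, rfl⟩ : ∃ a : Fin (m + 1), (a : ℕ) + 1 = i := ⟨⟨i - 1, by omega⟩, by simp; omega⟩
  have hap : a.castSucc < π⁻¹ (Fin.last (m + 1)) := Fin.lt_def.2 (by simpa using hip)
  obtain ⟨b, hb⟩ : ∃ b : Fin (m + 1), π a.castSucc = b.castSucc :=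
    ⟨_, (Fin.castSucc_castPred _ fun h => hap.ne (by simp [← h])).symm⟩
  obtain ⟨σ, rfl⟩ : ∃ σ, insertAt a.castSucc b.castSucc σ = π := hb ▸ exists_insertAt_eq _ π
  have hprev : ∀ x < a, σ x < b := fun x hx => by
    have hxa : x.castSucc < a.castSucc := Fin.castSucc_lt_castSucc_iff.2 hx
    have := strictMonoOn_of_mem_Qset hπ (hxa.trans hap).le hap.le hxa
    rwa [← Fin.succAbove_of_castSucc_lt _ _ hxa, insertAt_apply_succAbove, insertAt_apply_self,
      Fin.succAbove_lt_iff_castSucc_lt, Fin.castSucc_lt_castSucc_iff] at this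
  have hge : b ≤ σ a :=
    insertAt_castSucc_lt_succ_iff.1 ((mem_filter.1 hπ).2 a (Fin.castSucc_lt_iff_succ_le.1 hap))
  have hpos := insertPos_eq hprev hge
  have hins : insertInPrefix σ b = insertAt a.castSucc b.castSucc σ := by
    rw [insertInPrefix, hpos]
  rw [← hins, insertInPrefix_mem_Qset_iff] at hπ
  rw [← hins, asc_insertInPrefix] at hasc
  exact ⟨b, σ, hπ, by omega, hins, by rw [hpos]⟩

end RFAbar

theorem card_RFAbar (n k : ℕ) (hn : 1 ≤ n) (hk : 1 ≤ k) :
    (RFAbar n k).card = n * Btil (n - 1) (k - 1) := by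
  obtain ⟨m, rfl⟩ : ∃ m, n = m + 1 := ⟨n - 1, by omega⟩
  have hcard : (m + 1) * Btil m (k - 1) =
      #((univ : Finset (Fin (m + 1))) ×ˢ (Qset m).filter fun σ => asc σ = k - 1) := by
    rw [card_product, card_fin, Btil]
  rw [Nat.add_sub_cancel, hcard, eq_comm]
  refine card_nbij (fun p => (insertInPrefix p.2 p.1, (insertPos p.2 p.1 : ℕ) + 1)) ?_ ?_ ?_
  · rintro ⟨b, σ⟩ h
    simp only [coe_product, Set.mem_prod, mem_coe, mem_filter] at h
    exact insertInPrefix_mem_RFAbar hk h.2.1 h.2.2 b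
  · rintro ⟨b, σ⟩ - ⟨c, τ⟩ - h
    simp only [Prod.mk.injEq, add_left_inj, Fin.val_inj] at h
    simpa using insertInPrefix_inj _ _ h.1 h.2
  · rintro ⟨π, i⟩ h
    obtain ⟨b, σ, hσ, hasc, rfl, rfl⟩ := exists_insertInPrefix_eq h
    exact ⟨(b, σ), by simp [hσ, hasc], rfl⟩
end

section
/- For every integer n ≥ 2, Σ_{σ ∈ 𝒬̂_{n+1}} (−1)^{cyc(σ)} = n − 1. -/
open Finset

/-- `fixp(σ)`: the number of fixed points of `σ`. -/
def fixp {n : ℕ} (σ : Equiv.Perm (Fin n)) : ℕ :=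
  (Finset.univ.filter fun i => σ i = i).card

/-- `cyc(σ)`: the number of cycles of `σ`, fixed points counted. -/
def cyc {n : ℕ} (σ : Equiv.Perm (Fin n)) : ℕ :=
  σ.cycleType.card + fixp σ

/-- `𝒬̂_{m+1}`: permutations `σ` of `{1, …, m+1}` such that every element `x` other
than the largest element in the cycle of `σ` containing the largest element
satisfies `σ(x) > x`. -/
noncomputable def Qhat (m : ℕ) : Finset (Equiv.Perm (Fin (m + 1))) :=
  Finset.univ.filter fun σ =>
    ∀ x, σ.SameCycle x (Fin.last m) → x ≠ Fin.last m → x < σ x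

/-!
Write `C(σ)` for the set of points outside the cycle of `σ` through the largest point `ℓ`.
Since `(-1) ^ cyc σ = (-1) ^ (n + 1) * sign σ`, it suffices to sum signs. The defining condition
of `𝒬̂` only constrains `σ` off `C(σ)`, so for `|C(σ)| ≥ 2` multiplying by the transposition of
the least and greatest points of `C(σ)` is a sign-reversing involution of `𝒬̂` preserving `C(σ)`,
and these terms cancel. The condition does force the cycle through `ℓ` to be the increasing cycle
on the complement of `C(σ)`, so `σ` is determined by `C(σ)` and its restriction to `C(σ)`.
What survives is the full rotation (`C = ∅`, sign `(-1) ^ n`) and, for each of the `n` points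
`j ≠ ℓ`, the rotation that skips the fixed point `j` (`C = {j}`, sign `(-1) ^ (n + 1)`),
giving `(-1) ^ (n + 1) * ((-1) ^ n - n * (-1) ^ n) = n - 1`.
-/

open Equiv Equiv.Perm

namespace Equiv.Perm

variable {α : Type*}

section CycleCompl

variable [Fintype α] [DecidableEq α] {σ τ : Perm α} {p x : α}

def cycleCompl (σ : Perm α) (p : α) : Finset α :=
  univ.filter fun x => ¬ σ.SameCycle x p

@[simp]
lemma mem_cycleCompl : x ∈ σ.cycleCompl p ↔ ¬ σ.SameCycle x p := by
  simp [cycleCompl]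

lemma apply_mem_cycleCompl_iff : σ x ∈ σ.cycleCompl p ↔ x ∈ σ.cycleCompl p := by
  simp only [mem_cycleCompl, sameCycle_apply_left]

lemma self_notMem_cycleCompl : p ∉ σ.cycleCompl p := by
  simp [SameCycle.refl]

lemma mem_cycleCompl_of_apply_eq_self (hx : σ x = x) (hxp : x ≠ p) : x ∈ σ.cycleCompl p :=
  mem_cycleCompl.2 fun h => hxp (h.eq_of_left hx)

lemma cycleCompl_eq_of_eqOn (h : ∀ x, σ.SameCycle x p → τ x = σ x) :
    τ.cycleCompl p = σ.cycleCompl p := by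
  have hpow : ∀ k : ℕ, (τ ^ k) p = (σ ^ k) p := by
    intro k
    induction k with
    | zero => rfl
    | succ k ih =>
      rw [pow_succ', mul_apply, ih, h _ (sameCycle_pow_left.2 (SameCycle.refl _ _)),
        ← mul_apply, ← pow_succ']
  ext x
  simp only [mem_cycleCompl, not_iff_not]
  constructor
  · intro hx
    obtain ⟨k, rfl⟩ := hx.symm.exists_nat_pow_eq
    rw [hpow]
    exact sameCycle_pow_left.2 (SameCycle.refl _ _)
  · intro hx
    obtain ⟨k, rfl⟩ := hx.symm.exists_nat_pow_eq
    rw [← hpow]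
    exact sameCycle_pow_left.2 (SameCycle.refl _ _)

lemma cycleCompl_mul_swap {a b : α} (ha : a ∈ σ.cycleCompl p) (hb : b ∈ σ.cycleCompl p) :
    (σ * swap a b).cycleCompl p = σ.cycleCompl p := by
  refine cycleCompl_eq_of_eqOn fun x hx => ?_
  have hxa : x ≠ a := by rintro rfl; exact mem_cycleCompl.1 ha hx
  have hxb : x ≠ b := by rintro rfl; exact mem_cycleCompl.1 hb hx
  rw [mul_apply, swap_apply_of_ne_of_ne hxa hxb]

end CycleCompl

lemma apply_eq_of_eqOn_of_card_le_succ {σ τ : Perm α} {V W : Finset α} {x : α} (hVW : #W ≤ #V + 1)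
    (hσV : ∀ y ∈ V, σ y ∈ W) (heq : ∀ y ∈ V, σ y = τ y) (hx : x ∉ V)
    (hσx : σ x ∈ W) (hτx : τ x ∈ W) : σ x = τ x := by
  classical
  have hsub : V.image σ ⊆ W := by
    intro z hz
    obtain ⟨y, hy, rfl⟩ := mem_image.1 hz
    exact hσV y hy
  have hcard : #(W \ V.image σ) ≤ 1 := by
    rw [card_sdiff_of_subset hsub, card_image_of_injective _ σ.injective]
    omega
  refine card_le_one.1 hcard _ (mem_sdiff.2 ⟨hσx, ?_⟩) _ (mem_sdiff.2 ⟨hτx, ?_⟩)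
  · intro hz
    obtain ⟨y, hy, hyx⟩ := mem_image.1 hz
    exact hx (σ.injective hyx ▸ hy)
  · intro hz
    obtain ⟨y, hy, hyx⟩ := mem_image.1 hz
    rw [heq y hy] at hyx
    exact hx (τ.injective hyx ▸ hy)

lemma sum_sign_eq_zero_of_mul_swap_mem [LinearOrder α] [Fintype α] (s : Finset (Perm α))
    (F : Perm α → Finset α) (hF : ∀ σ ∈ s, 1 < #(F σ))
    (hmem : ∀ σ ∈ s, ∀ a ∈ F σ, ∀ b ∈ F σ, σ * swap a b ∈ s)
    (hswap : ∀ σ ∈ s, ∀ a ∈ F σ, ∀ b ∈ F σ, F (σ * swap a b) = F σ) :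
    ∑ σ ∈ s, (sign σ : ℤ) = 0 := by
  have hne : ∀ σ ∈ s, (F σ).Nonempty := fun σ hσ => card_pos.1 (by linarith [hF σ hσ])
  have hlt : ∀ σ (hσ : σ ∈ s), (F σ).min' (hne σ hσ) < (F σ).max' (hne σ hσ) :=
    fun σ hσ => min'_lt_max'_of_card _ (hF σ hσ)
  refine sum_involution
    (fun σ hσ => σ * swap ((F σ).min' (hne σ hσ)) ((F σ).max' (hne σ hσ)))
    (fun σ hσ => ?_) (fun σ hσ _ => ?_)
    (fun σ hσ => hmem σ hσ _ (min'_mem _ _) _ (max'_mem _ _)) (fun σ hσ => ?_)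
  · rw [sign_mul, sign_swap (hlt σ hσ).ne]
    push_cast
    ring
  · rw [Ne, mul_eq_left, swap_eq_one_iff]
    exact (hlt σ hσ).ne
  · simp only [hswap σ hσ _ (min'_mem _ _) _ (max'_mem _ _)]
    rw [mul_assoc, swap_mul_self, mul_one]

section LinearOrder

variable [LinearOrder α] [WellFoundedGT α] {σ τ : Perm α} {p : α}

lemma sameCycle_of_forall_lt_apply {s : Set α} (h : ∀ x ∈ s, x ≠ p → x < σ x ∧ σ x ∈ s)
    {x : α} (hx : x ∈ s) : σ.SameCycle x p := by
  induction x using WellFoundedGT.induction with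
  | _ x ih =>
  by_cases hxp : x = p
  · rw [hxp]
  · obtain ⟨hlt, hmem⟩ := h x hx hxp
    exact sameCycle_apply_left.1 (ih _ hlt hmem)

/-- By downward induction on `x`: the points of `s` above `x` other than `p` are mapped into the
points of `s` above `x`, which leaves room for only one value of `σ x` and of `τ x`. -/
lemma eqOn_of_forall_lt_apply {s : Finset α} (hσs : ∀ x ∈ s, σ x ∈ s) (hτs : ∀ x ∈ s, τ x ∈ s)
    (hσ : ∀ x ∈ s, x ≠ p → x < σ x) (hτ : ∀ x ∈ s, x ≠ p → x < τ x) :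
    Set.EqOn σ τ s := by
  have hoff : ∀ x ∈ s, x ≠ p → σ x = τ x := by
    intro x
    induction x using WellFoundedGT.induction with
    | _ x ih =>
    intro hx hxp
    refine apply_eq_of_eqOn_of_card_le_succ (V := (s.filter (x < ·)).erase p)
      (W := s.filter (x < ·)) ?_ ?_ ?_ ?_ ?_ ?_
    · have := pred_card_le_card_erase (s := s.filter (x < ·)) (a := p)
      omega
    · intro y hy
      obtain ⟨hyp, hy⟩ := mem_erase.1 hy
      obtain ⟨hys, hxy⟩ := mem_filter.1 hy
      exact mem_filter.2 ⟨hσs y hys, hxy.trans (hσ y hys hyp)⟩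
    · intro y hy
      obtain ⟨hyp, hy⟩ := mem_erase.1 hy
      obtain ⟨hys, hxy⟩ := mem_filter.1 hy
      exact ih y hxy hys hyp
    · simp
    · exact mem_filter.2 ⟨hσs x hx, hσ x hx hxp⟩
    · exact mem_filter.2 ⟨hτs x hx, hτ x hx hxp⟩
  intro x hx
  by_cases hxp : x = p
  · subst hxp
    refine apply_eq_of_eqOn_of_card_le_succ (V := s.erase x) (W := s) ?_
      (fun y hy => hσs y (mem_of_mem_erase hy))
      (fun y hy => hoff y (mem_of_mem_erase hy) (ne_of_mem_erase hy)) (notMem_erase x s)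
      (hσs x hx) (hτs x hx)
    have := pred_card_le_card_erase (s := s) (a := x)
    omega
  · exact hoff x hx hxp

end LinearOrder

end Equiv.Perm

lemma neg_one_pow_cyc {n : ℕ} (σ : Perm (Fin n)) :
    (-1 : ℤ) ^ cyc σ = (-1) ^ n * (sign σ : ℤ) := by
  have hfix : fixp σ + #σ.support = n := by
    rw [fixp, support, card_filter_add_card_filter_not, card_univ, Fintype.card_fin]
  have hsign : (sign σ : ℤ) = (-1) ^ (#σ.support + σ.cycleType.card) := by
    rw [sign_of_cycleType, sum_cycleType]
    push_cast
    rfl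
  have hcyc : cyc σ + 2 * #σ.support = n + (#σ.support + σ.cycleType.card) := by
    unfold cyc
    omega
  rw [hsign, ← pow_add, ← hcyc, pow_add, pow_mul]
  norm_num

section Qhat

variable {n : ℕ}

lemma mem_Qhat {σ : Perm (Fin (n + 1))} :
    σ ∈ Qhat n ↔ ∀ x, σ.SameCycle x (Fin.last n) → x ≠ Fin.last n → x < σ x := by
  simp [Qhat]

lemma mul_swap_mem_Qhat {σ : Perm (Fin (n + 1))} (hσ : σ ∈ Qhat n) {a b : Fin (n + 1)}
    (ha : a ∈ σ.cycleCompl (Fin.last n)) (hb : b ∈ σ.cycleCompl (Fin.last n)) :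
    σ * swap a b ∈ Qhat n := by
  rw [mem_Qhat] at hσ ⊢
  intro x hx hxl
  have hx' : σ.SameCycle x (Fin.last n) := by
    by_contra h
    rw [← mem_cycleCompl, ← cycleCompl_mul_swap ha hb, mem_cycleCompl] at h
    exact h hx
  have hxa : x ≠ a := by rintro rfl; exact mem_cycleCompl.1 ha hx'
  have hxb : x ≠ b := by rintro rfl; exact mem_cycleCompl.1 hb hx'
  rw [mul_apply, swap_apply_of_ne_of_ne hxa hxb]
  exact hσ x hx' hxl

lemma sum_sign_filter_one_lt_card_cycleCompl :
    ∑ σ ∈ (Qhat n).filter (fun σ => 1 < #(σ.cycleCompl (Fin.last n))), (sign σ : ℤ) = 0 := by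
  refine sum_sign_eq_zero_of_mul_swap_mem _ (fun σ => σ.cycleCompl (Fin.last n))
    (fun σ hσ => (mem_filter.1 hσ).2) (fun σ hσ a ha b hb => ?_)
    (fun σ hσ a ha b hb => cycleCompl_mul_swap ha hb)
  rw [mem_filter] at hσ ⊢
  exact ⟨mul_swap_mem_Qhat hσ.1 ha hb, cycleCompl_mul_swap ha hb ▸ hσ.2⟩

lemma eq_of_mem_Qhat {σ τ : Perm (Fin (n + 1))} (hσ : σ ∈ Qhat n) (hτ : τ ∈ Qhat n)
    (hC : σ.cycleCompl (Fin.last n) = τ.cycleCompl (Fin.last n))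
    (heq : Set.EqOn σ τ (σ.cycleCompl (Fin.last n))) : σ = τ := by
  refine Equiv.ext fun x => ?_
  by_cases hx : x ∈ σ.cycleCompl (Fin.last n)
  · exact heq hx
  · refine eqOn_of_forall_lt_apply (s := (σ.cycleCompl (Fin.last n))ᶜ) (p := Fin.last n)
      ?_ ?_ ?_ ?_ (mem_compl.2 hx)
    · intro y hy
      rwa [mem_compl, apply_mem_cycleCompl_iff, ← mem_compl]
    · intro y hy
      rwa [hC, mem_compl, apply_mem_cycleCompl_iff, ← mem_compl, ← hC]
    · intro y hy
      rw [mem_compl, mem_cycleCompl, not_not] at hy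
      exact mem_Qhat.1 hσ y hy
    · intro y hy
      rw [hC, mem_compl, mem_cycleCompl, not_not] at hy
      exact mem_Qhat.1 hτ y hy

lemma Fin.lt_add_one_of_ne_last {x : Fin (n + 1)} (hx : x ≠ Fin.last n) : x < x + 1 :=
  Fin.lt_add_one_iff.2 (Fin.lt_last_iff_ne_last.2 hx)

lemma lt_finRotate_apply {x : Fin (n + 1)} (hx : x ≠ Fin.last n) : x < finRotate (n + 1) x :=
  finRotate_apply x ▸ Fin.lt_add_one_of_ne_last hx

lemma finRotate_mem_Qhat : finRotate (n + 1) ∈ Qhat n :=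
  mem_Qhat.2 fun _ _ hx => lt_finRotate_apply hx

lemma cycleCompl_finRotate : (finRotate (n + 1)).cycleCompl (Fin.last n) = ∅ := by
  ext x
  simp only [mem_cycleCompl, notMem_empty, iff_false, not_not]
  exact sameCycle_of_forall_lt_apply (s := Set.univ)
    (fun _ _ hy => ⟨lt_finRotate_apply hy, trivial⟩) trivial

/-- The cycle `0 → 1 → ⋯ → n → 0` with `j` removed from it and fixed. -/
def finRotateSkip (j : Fin (n + 1)) : Perm (Fin (n + 1)) :=
  swap j (j + 1) * finRotate (n + 1)

lemma finRotateSkip_apply_self (j : Fin (n + 1)) : finRotateSkip j j = j := by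
  rw [finRotateSkip, mul_apply, finRotate_apply, swap_apply_right]

lemma lt_finRotateSkip_apply {j x : Fin (n + 1)} (hj : j ≠ Fin.last n) (hxj : x ≠ j)
    (hx : x ≠ Fin.last n) : x < finRotateSkip j x := by
  rw [finRotateSkip, mul_apply, finRotate_apply]
  by_cases h : x + 1 = j
  · rw [h, swap_apply_left]
    exact (h ▸ Fin.lt_add_one_of_ne_last hx).trans (Fin.lt_add_one_of_ne_last hj)
  · rw [swap_apply_of_ne_of_ne h fun h' => hxj (add_right_cancel h')]
    exact Fin.lt_add_one_of_ne_last hx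

lemma finRotateSkip_mem_Qhat {j : Fin (n + 1)} (hj : j ≠ Fin.last n) :
    finRotateSkip j ∈ Qhat n := by
  refine mem_Qhat.2 fun x hx hxl => lt_finRotateSkip_apply hj ?_ hxl
  rintro rfl
  exact mem_cycleCompl.1 (mem_cycleCompl_of_apply_eq_self (finRotateSkip_apply_self x) hj) hx

lemma cycleCompl_finRotateSkip {j : Fin (n + 1)} (hj : j ≠ Fin.last n) :
    (finRotateSkip j).cycleCompl (Fin.last n) = {j} := by
  ext x
  rw [mem_singleton]
  constructor
  · intro hx
    by_contra hxj
    refine mem_cycleCompl.1 hx (sameCycle_of_forall_lt_apply (s := {y | y ≠ j})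
      (fun y hy hyl => ⟨lt_finRotateSkip_apply hj hy hyl, fun h => hy ?_⟩) hxj)
    exact (finRotateSkip j).injective (h.trans (finRotateSkip_apply_self j).symm)
  · rintro rfl
    exact mem_cycleCompl_of_apply_eq_self (finRotateSkip_apply_self x) hj

lemma sign_finRotateSkip {j : Fin (n + 1)} (hj : j ≠ Fin.last n) :
    sign (finRotateSkip j) = -sign (finRotate (n + 1)) := by
  rw [finRotateSkip, Perm.sign_mul, sign_swap (Fin.lt_add_one_of_ne_last hj).ne, neg_one_mul]

lemma filter_Qhat_card_cycleCompl_le_one :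
    (Qhat n).filter (fun σ => #(σ.cycleCompl (Fin.last n)) ≤ 1) =
      insert (finRotate (n + 1)) ((univ.erase (Fin.last n)).image finRotateSkip) := by
  ext σ
  simp only [mem_filter, mem_insert, mem_image, mem_erase, mem_univ, and_true]
  constructor
  · rintro ⟨hσ, hcard⟩
    rcases Nat.le_one_iff_eq_zero_or_eq_one.1 hcard with h0 | h1
    · rw [card_eq_zero] at h0
      refine Or.inl (eq_of_mem_Qhat hσ finRotate_mem_Qhat ?_ ?_)
      · rw [h0, cycleCompl_finRotate]
      · simp [h0]
    · obtain ⟨j, hj⟩ := card_eq_one.1 h1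
      have hjl : j ≠ Fin.last n := by
        rintro rfl
        exact self_notMem_cycleCompl (hj ▸ mem_singleton_self _)
      have hσj : σ j = j := by
        simpa [hj] using (apply_mem_cycleCompl_iff (σ := σ) (p := Fin.last n) (x := j))
      refine Or.inr ⟨j, hjl, eq_of_mem_Qhat (finRotateSkip_mem_Qhat hjl) hσ ?_ ?_⟩
      · rw [hj, cycleCompl_finRotateSkip hjl]
      · rw [cycleCompl_finRotateSkip hjl, coe_singleton, Set.eqOn_singleton,
          finRotateSkip_apply_self, hσj]
  · rintro (rfl | ⟨j, hj, rfl⟩)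
    · exact ⟨finRotate_mem_Qhat, by simp [cycleCompl_finRotate]⟩
    · exact ⟨finRotateSkip_mem_Qhat hj, by simp [cycleCompl_finRotateSkip hj]⟩

lemma sum_sign_filter_card_cycleCompl_le_one :
    ∑ σ ∈ (Qhat n).filter (fun σ => #(σ.cycleCompl (Fin.last n)) ≤ 1), (sign σ : ℤ) =
      (1 - n) * (-1) ^ n := by
  have hinj : Set.InjOn finRotateSkip (univ.erase (Fin.last n) : Set (Fin (n + 1))) := by
    intro j hj k hk h
    simpa [cycleCompl_finRotateSkip (ne_of_mem_erase (mem_coe.1 hj)),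
      cycleCompl_finRotateSkip (ne_of_mem_erase (mem_coe.1 hk))] using
      congrArg (cycleCompl · (Fin.last n)) h
  have hnotMem : finRotate (n + 1) ∉ (univ.erase (Fin.last n)).image finRotateSkip := by
    intro h
    obtain ⟨j, hj, h⟩ := mem_image.1 h
    simpa [cycleCompl_finRotate, cycleCompl_finRotateSkip (ne_of_mem_erase hj)] using
      congrArg (cycleCompl · (Fin.last n)) h
  rw [filter_Qhat_card_cycleCompl_le_one, sum_insert hnotMem, sum_image hinj,
    sum_congr rfl fun j hj => by rw [sign_finRotateSkip (ne_of_mem_erase hj)], sum_const,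
    card_erase_of_mem (mem_univ _), card_univ, Fintype.card_fin, sign_finRotate]
  push_cast
  ring

end Qhat

theorem sum_cyc_sign_general (n : ℕ) :
    ∑ σ ∈ Qhat n, (-1 : ℤ) ^ cyc σ = (n : ℤ) - 1 := by
  have hsq : ((-1 : ℤ) ^ n) ^ 2 = 1 := by
    rw [← pow_mul, mul_comm, pow_mul]
    norm_num
  simp only [neg_one_pow_cyc, ← mul_sum]
  rw [← sum_filter_add_sum_filter_not _ (fun σ => #(σ.cycleCompl (Fin.last n)) ≤ 1)]
  simp only [not_le]
  rw [sum_sign_filter_card_cycleCompl_le_one, sum_sign_filter_one_lt_card_cycleCompl]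
  linear_combination (n - 1 : ℤ) * hsq

theorem sum_cyc_sign (n : ℕ) (hn : 2 ≤ n) :
    ∑ σ ∈ Qhat n, (-1 : ℤ) ^ cyc σ = (n : ℤ) - 1 :=
  sum_cyc_sign_general n
end
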